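/- Let H be a real Hilbert space and let C ⊆ H be a nonempty, closed, convex set containing 0. Then a function f ∈ Γ0(H) satisfies ‖prox_f(x)‖ = d_C(x) for all x ∈ H if and only if f equals the support function σ_C of C up to an additive constant. -/

import Mathlib

/-!
If `f = σ_C + c`, the optimality condition `x - p ∈ ∂f p` of the proximal point is solved by
`p = x - P_C x`, because the projection `P_C x` maximizes `⟪·, x - P_C x⟫` on `C`; hence
`‖prox_f x‖ = ‖x - P_C x‖ = d_C x`.

Conversely, if `‖prox_f x‖ = d_C x`, then `prox_f` vanishes on `C`, so `C ⊆ ∂f 0`, which gives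
`f ≥ f 0 + σ_C`. Monotonicity of `∂f` then forces `prox_f x = x - P_C x`, so `x - prox_f x ∈ C`
for every `x`. For the reverse inequality at `y`, the points `t⁻¹ • prox_f (t • y)` tend to `y`
as `t → ∞` and `f` is at most `f 0 + σ_C y` there; lower semicontinuity concludes.
-/

open scoped InnerProductSpace
noncomputable section

variable {H : Type*} [NormedAddCommGroup H] [InnerProductSpace ℝ H] [CompleteSpace H]

/-- Convexity for extended-real-valued functions on a real Hilbert space. -/
def ERealConvexOn (f : H → EReal) : Prop :=
  ∀ x y : H, ∀ a b : ℝ, 0 ≤ a → 0 ≤ b → a + b = 1 →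
    f (a • x + b • y) ≤ (a : EReal) * f x + (b : EReal) * f y

/-- `f ∈ Γ₀(H)`: proper (never `⊥`, not identically `⊤`), convex and lower semicontinuous. -/
def Gamma0 (f : H → EReal) : Prop :=
  (∃ x, f x ≠ ⊤) ∧ (∀ x, f x ≠ ⊥) ∧ ERealConvexOn f ∧ LowerSemicontinuous f

/-- `p` is the proximal point of `f` at `x`, i.e. `p` minimizes `y ↦ f y + (1/2)‖x - y‖²`. -/
def IsProx (f : H → EReal) (x p : H) : Prop :=
  ∀ y : H, f p + (((1:ℝ)/2 * ‖x - p‖ ^ 2 : ℝ) : EReal)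
    ≤ f y + (((1:ℝ)/2 * ‖x - y‖ ^ 2 : ℝ) : EReal)

/-- The Fenchel (Legendre-Fenchel) conjugate of `f`. -/
def fenchel (f : H → EReal) (p : H) : EReal :=
  ⨆ v : H, ((⟪p, v⟫_ℝ : ℝ) : EReal) - f v

/-- The support function of a set `C ⊆ H`. -/
def suppFn (C : Set H) (x : H) : EReal :=
  ⨆ y : C, ((⟪(y : H), x⟫_ℝ : ℝ) : EReal)

open Filter Topology

section General

variable {E : Type*} [NormedAddCommGroup E] [InnerProductSpace ℝ E] {f : E → EReal}

def subdifferential (f : E → EReal) (x : E) : Set E :=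
  {u | ∀ y, f x + ((⟪u, y - x⟫_ℝ : ℝ) : EReal) ≤ f y}

lemma Gamma0.exists_eq_coe (hf : Gamma0 f) {x : E} (hx : f x ≠ ⊤) : ∃ α : ℝ, f x = α :=
  ⟨(f x).toReal, (EReal.coe_toReal hx (hf.2.1 x)).symm⟩

lemma ERealConvexOn.apply_smul_add_smul_le (hconv : ERealConvexOn f) {x y : E} {α β : ℝ}
    (hx : f x = α) (hy : f y = β) {a b : ℝ} (ha : 0 ≤ a) (hb : 0 ≤ b) (hab : a + b = 1) :
    f (a • x + b • y) ≤ ((a * α + b * β : ℝ) : EReal) := by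
  simpa only [hx, hy, EReal.coe_add, EReal.coe_mul] using hconv x y a b ha hb hab

lemma ne_top_of_mem_subdifferential (hproper : ∃ z, f z ≠ ⊤) {x u : E}
    (hu : u ∈ subdifferential f x) : f x ≠ ⊤ := by
  obtain ⟨z, hz⟩ := hproper
  intro hx
  exact hz (by simpa [hx] using hu z)

lemma subdifferential_add_const (g : E → EReal) (c : ℝ) :
    subdifferential (fun x ↦ g x + (c : EReal)) = subdifferential g := by
  ext x u
  refine forall_congr' fun y ↦ ?_
  rw [add_right_comm]
  exact (EReal.addLECancellable_coe c).add_le_add_iff_right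

lemma inner_sub_nonneg_of_mem_subdifferential (hf : Gamma0 f) {x y u v : E}
    (hu : u ∈ subdifferential f x) (hv : v ∈ subdifferential f y) : 0 ≤ ⟪u - v, x - y⟫_ℝ := by
  obtain ⟨α, hα⟩ := hf.exists_eq_coe (ne_top_of_mem_subdifferential hf.1 hu)
  obtain ⟨β, hβ⟩ := hf.exists_eq_coe (ne_top_of_mem_subdifferential hf.1 hv)
  have hxy := hu y
  have hyx := hv x
  rw [hα, hβ, ← EReal.coe_add, EReal.coe_le_coe_iff] at hxy hyx
  have : ⟪u - v, x - y⟫_ℝ = -⟪u, y - x⟫_ℝ - ⟪v, x - y⟫_ℝ := by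
    rw [inner_sub_left, ← inner_neg_right, neg_sub]
  linarith

lemma isProx_of_sub_mem_subdifferential {x p : E} (h : x - p ∈ subdifferential f p) :
    IsProx f x p := by
  intro y
  have hsq : (1 : ℝ) / 2 * ‖x - p‖ ^ 2 - ⟪x - p, y - p⟫_ℝ ≤ 1 / 2 * ‖x - y‖ ^ 2 := by
    have : x - y = (x - p) - (y - p) := by abel
    rw [this, norm_sub_sq_real (x - p) (y - p)]
    nlinarith [sq_nonneg ‖y - p‖]
  calc f p + (((1 : ℝ) / 2 * ‖x - p‖ ^ 2 : ℝ) : EReal)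
      = f p + ((⟪x - p, y - p⟫_ℝ : ℝ) : EReal)
          + (((1 : ℝ) / 2 * ‖x - p‖ ^ 2 - ⟪x - p, y - p⟫_ℝ : ℝ) : EReal) := by
        rw [add_assoc, ← EReal.coe_add, add_sub_cancel]
    _ ≤ f y + (((1 : ℝ) / 2 * ‖x - y‖ ^ 2 : ℝ) : EReal) :=
        add_le_add (h y) (EReal.coe_le_coe_iff.2 hsq)

lemma IsProx.ne_top (hf : Gamma0 f) {x p : E} (h : IsProx f x p) : f p ≠ ⊤ := by
  obtain ⟨y, hy⟩ := hf.1
  obtain ⟨β, hβ⟩ := hf.exists_eq_coe hy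
  intro hp
  have := h y
  rw [hp, hβ, EReal.top_add_coe, ← EReal.coe_add, top_le_iff] at this
  exact EReal.coe_ne_top _ this

/-- Compare `p` with the points `p + t • (y - p)`, `0 < t < 1`, using convexity, and let `t → 0`. -/
lemma IsProx.sub_mem_subdifferential (hf : Gamma0 f) {x p : E} (h : IsProx f x p) :
    x - p ∈ subdifferential f p := by
  intro y
  obtain ⟨α, hα⟩ := hf.exists_eq_coe (h.ne_top hf)
  rcases eq_or_ne (f y) ⊤ with hy | hy
  · simp [hy]
  obtain ⟨β, hβ⟩ := hf.exists_eq_coe hy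
  rw [hα, hβ, ← EReal.coe_add, EReal.coe_le_coe_iff]
  have hseg : ∀ t ∈ Set.Ioo (0 : ℝ) 1, α + ⟪x - p, y - p⟫_ℝ ≤ β + t / 2 * ‖y - p‖ ^ 2 := by
    rintro t ⟨ht0, ht1⟩
    have hconv := hf.2.2.1.apply_smul_add_smul_le hβ hα ht0.le (sub_nonneg.2 ht1.le)
      (add_sub_cancel t 1)
    have hpt : t • y + (1 - t) • p = p + t • (y - p) := by
      rw [smul_sub, sub_smul, one_smul]; abel
    rw [hpt] at hconv
    obtain ⟨γ, hγ⟩ := hf.exists_eq_coe (ne_top_of_le_ne_top (EReal.coe_ne_top _) hconv)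
    rw [hγ, EReal.coe_le_coe_iff] at hconv
    have hcmp := h (p + t • (y - p))
    rw [hα, hγ, ← EReal.coe_add, ← EReal.coe_add, EReal.coe_le_coe_iff,
      show x - (p + t • (y - p)) = (x - p) - t • (y - p) by abel, norm_sub_sq_real (x - p),
      real_inner_smul_right, norm_smul, Real.norm_of_nonneg ht0.le] at hcmp
    have : t * (α + ⟪x - p, y - p⟫_ℝ) ≤ t * (β + t / 2 * ‖y - p‖ ^ 2) := by nlinarith
    exact le_of_mul_le_mul_left this ht0
  have hlim : Tendsto (fun t : ℝ ↦ β + t / 2 * ‖y - p‖ ^ 2) (𝓝[>] 0) (𝓝 β) :=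
    tendsto_nhdsWithin_of_tendsto_nhds <| by
      simpa using ((continuous_id.div_const 2).mul continuous_const).const_add β |>.tendsto 0
  exact ge_of_tendsto hlim (eventually_of_mem (Ioo_mem_nhdsGT one_pos) hseg)

lemma isProx_iff_sub_mem_subdifferential (hf : Gamma0 f) {x p : E} :
    IsProx f x p ↔ x - p ∈ subdifferential f p :=
  ⟨(·.sub_mem_subdifferential hf), isProx_of_sub_mem_subdifferential⟩

lemma IsProx.unique (hf : Gamma0 f) {x p p' : E} (hp : IsProx f x p) (hp' : IsProx f x p') :
    p = p' := by
  have hmono := inner_sub_nonneg_of_mem_subdifferential hf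
    (hp.sub_mem_subdifferential hf) (hp'.sub_mem_subdifferential hf)
  rw [sub_sub_sub_cancel_left, ← neg_sub, inner_neg_left, real_inner_self_eq_norm_sq] at hmono
  exact sub_eq_zero.1 (norm_eq_zero.1 (by nlinarith [norm_nonneg (p - p')]))

end General

section SupportFunction

variable {E : Type*} [NormedAddCommGroup E] [InnerProductSpace ℝ E] {f : E → EReal} {C : Set E}

lemma le_suppFn {z : E} (hz : z ∈ C) (y : E) : ((⟪z, y⟫_ℝ : ℝ) : EReal) ≤ suppFn C y :=
  le_iSup (fun w : C ↦ ((⟪(w : E), y⟫_ℝ : ℝ) : EReal)) ⟨z, hz⟩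

lemma mem_subdifferential_suppFn {v d : E} (hv : v ∈ C) (hmax : ∀ w ∈ C, ⟪w, d⟫_ℝ ≤ ⟪v, d⟫_ℝ) :
    v ∈ subdifferential (suppFn C) d := by
  have hd : suppFn C d = ((⟪v, d⟫_ℝ : ℝ) : EReal) :=
    le_antisymm (iSup_le fun w ↦ EReal.coe_le_coe_iff.2 (hmax w w.2)) (le_suppFn hv d)
  intro y
  rw [hd, ← EReal.coe_add, ← inner_add_right, add_sub_cancel]
  exact le_suppFn hv y

lemma suppFn_add_le_of_subset_subdifferential {a : ℝ} (ha : f 0 = a)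
    (hC : ∀ z ∈ C, z ∈ subdifferential f 0) (y : E) : suppFn C y + a ≤ f y := by
  rw [← EReal.le_sub_iff_add_le (by simp) (by simp)]
  refine iSup_le fun z ↦ ?_
  rw [EReal.le_sub_iff_add_le (by simp) (by simp), add_comm, ← ha]
  simpa using hC z z.2 y

/-- Comparing `p = proxf (t • y)` with `0` bounds `f p` by `a + t σ - ‖t • y - p‖²`; convexity
between `0` and `p` then bounds `f` at `t⁻¹ • p`, which lies within `√(σ / t)` of `y`. -/
lemma IsProx.apply_inv_smul_le_and_norm_sub_sq_le (hf : Gamma0 f) {a σ t : ℝ} (ha : f 0 = a)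
    (hmin : ∀ z, f 0 ≤ f z) (ht : 1 ≤ t) {y p : E} (hp : IsProx f (t • y) p)
    (hσ : ⟪t • y - p, y⟫_ℝ ≤ σ) :
    f (t⁻¹ • p) ≤ ((a + σ : ℝ) : EReal) ∧ ‖t⁻¹ • p - y‖ ^ 2 ≤ σ / t := by
  have ht0 : 0 < t := by linarith
  obtain ⟨q, rfl⟩ : ∃ q, p = t • y - q := ⟨t • y - p, (sub_sub_cancel _ _).symm⟩
  rw [sub_sub_cancel] at hσ
  obtain ⟨α, hα⟩ := hf.exists_eq_coe (hp.ne_top hf)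
  have hupper : α ≤ a + ⟪q, t • y - q⟫_ℝ := by
    have := hp.sub_mem_subdifferential hf 0
    rw [hα, ha, ← EReal.coe_add, EReal.coe_le_coe_iff, zero_sub, inner_neg_right,
      sub_sub_cancel] at this
    linarith
  have hlower : a ≤ α := by simpa [ha, hα] using hmin (t • y - q)
  have hqp : ⟪q, t • y - q⟫_ℝ = t * ⟪q, y⟫_ℝ - ‖q‖ ^ 2 := by
    rw [inner_sub_right, real_inner_smul_right, real_inner_self_eq_norm_sq]
  have hqy : t * ⟪q, y⟫_ℝ ≤ t * σ := mul_le_mul_of_nonneg_left hσ ht0.le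
  have hq : ‖q‖ ^ 2 ≤ t * σ := by linarith
  constructor
  · have hconv := hf.2.2.1.apply_smul_add_smul_le hα ha (inv_nonneg.2 ht0.le)
      (sub_nonneg.2 (inv_le_one_of_one_le₀ ht)) (add_sub_cancel _ 1)
    rw [smul_zero, add_zero] at hconv
    refine hconv.trans (EReal.coe_le_coe_iff.2 ?_)
    have : t⁻¹ * (α - a) ≤ σ := by rw [inv_mul_le_iff₀ ht0]; linarith [sq_nonneg ‖q‖]
    linarith [show t⁻¹ * α + (1 - t⁻¹) * a = a + t⁻¹ * (α - a) by ring]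
  · have : t⁻¹ • (t • y - q) - y = -(t⁻¹ • q) := by
      rw [smul_sub, smul_smul, inv_mul_cancel₀ ht0.ne', one_smul, sub_sub_cancel_left]
    rw [this, norm_neg, norm_smul, mul_pow, Real.norm_of_nonneg (inv_nonneg.2 ht0.le)]
    calc t⁻¹ ^ 2 * ‖q‖ ^ 2 ≤ t⁻¹ ^ 2 * (t * σ) := by gcongr
      _ = σ / t := by field_simp

lemma apply_le_of_forall_sub_prox_mem (hf : Gamma0 f) {proxf : E → E}
    (hprox : ∀ x, IsProx f x (proxf x)) {a σ : ℝ} (ha : f 0 = a) (hmin : ∀ z, f 0 ≤ f z)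
    (hrange : ∀ x, x - proxf x ∈ C) {y : E} (hσ : ∀ z ∈ C, ⟪z, y⟫_ℝ ≤ σ) :
    f y ≤ ((a + σ : ℝ) : EReal) := by
  set w : ℝ → E := fun t ↦ t⁻¹ • proxf (t • y)
  have hbound : ∀ᶠ t in atTop, f (w t) ≤ ((a + σ : ℝ) : EReal) ∧ ‖w t - y‖ ^ 2 ≤ σ / t :=
    (eventually_ge_atTop 1).mono fun t ht ↦
      (hprox _).apply_inv_smul_le_and_norm_sub_sq_le hf ha hmin ht (hσ _ (hrange _))
  have hw : Tendsto w atTop (𝓝 y) := by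
    rw [tendsto_iff_norm_sub_tendsto_zero]
    refine squeeze_zero' (Eventually.of_forall fun _ ↦ norm_nonneg _)
      (hbound.mono fun t ht ↦ by simpa using Real.abs_le_sqrt ht.2) ?_
    simpa using (tendsto_const_nhds.div_atTop tendsto_id).sqrt
  exact (hf.2.2.2.isClosed_preimage _).mem_of_tendsto hw (hbound.mono fun _ ht ↦ ht.1)

lemma eq_suppFn_add_of_forall_sub_prox_mem (hf : Gamma0 f) {proxf : E → E}
    (hprox : ∀ x, IsProx f x (proxf x)) {a : ℝ} (ha : f 0 = a) (h0 : (0 : E) ∈ C)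
    (hC : ∀ z ∈ C, z ∈ subdifferential f 0) (hrange : ∀ x, x - proxf x ∈ C) (y : E) :
    f y = suppFn C y + a := by
  refine le_antisymm ?_ (suppFn_add_le_of_subset_subdifferential ha hC y)
  have hmin : ∀ z, f 0 ≤ f z := fun z ↦ by simpa using hC 0 h0 z
  induction hs : suppFn C y using EReal.rec with
  | bot => simpa [hs] using le_suppFn h0 y
  | coe σ =>
    rw [← EReal.coe_add, add_comm]
    exact apply_le_of_forall_sub_prox_mem hf hprox ha hmin hrange fun z hz ↦
      EReal.coe_le_coe_iff.1 (hs ▸ le_suppFn hz y)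
  | top => simp

end SupportFunction

lemma eq_of_norm_eq_of_norm_sq_le_inner {E : Type*} [NormedAddCommGroup E] [InnerProductSpace ℝ E]
    {p w : E} (hnorm : ‖w‖ = ‖p‖) (hinner : ‖p‖ ^ 2 ≤ ⟪w, p⟫_ℝ) : p = w := by
  have : ‖p - w‖ ^ 2 ≤ 0 := by
    rw [norm_sub_sq_real, hnorm, real_inner_comm]
    linarith
  exact sub_eq_zero.1 (norm_eq_zero.1 (by nlinarith [norm_nonneg (p - w)]))

lemma exists_mem_norm_sub_eq_infDist {C : Set H} (hne : C.Nonempty) (hcl : IsClosed C)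
    (hco : Convex ℝ C) (x : H) :
    ∃ v ∈ C, ‖x - v‖ = Metric.infDist x C ∧ ∀ w ∈ C, ⟪w, x - v⟫_ℝ ≤ ⟪v, x - v⟫_ℝ := by
  obtain ⟨v, hv, hmin⟩ := exists_norm_eq_iInf_of_complete_convex hne hcl.isComplete hco x
  refine ⟨v, hv, by simp [hmin, Metric.infDist_eq_iInf, dist_eq_norm], fun w hw ↦ ?_⟩
  have := (norm_eq_iInf_iff_real_inner_le_zero hco hv).1 hmin w hw
  rw [inner_sub_right, real_inner_comm w, real_inner_comm v] at this
  linarith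

/-- By monotonicity of `∂f`, `x - p ∈ ∂f p` and `v ∈ ∂f 0` give `‖p‖² ≤ ⟪x - v, p⟫`; for the
nearest point `v` of `C` to `x` both vectors have length `‖p‖`, so `p = x - v`. -/
lemma sub_mem_of_norm_prox_eq_infDist {f : H → EReal} (hf : Gamma0 f) {C : Set H}
    (hcl : IsClosed C) (hco : Convex ℝ C) (h0 : (0 : H) ∈ C)
    (hC : ∀ z ∈ C, z ∈ subdifferential f 0) {x p : H} (hp : IsProx f x p)
    (hnorm : ‖p‖ = Metric.infDist x C) : x - p ∈ C := by
  obtain ⟨v, hv, hvx, -⟩ := exists_mem_norm_sub_eq_infDist ⟨0, h0⟩ hcl hco x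
  have hmono := inner_sub_nonneg_of_mem_subdifferential hf (hp.sub_mem_subdifferential hf)
    (hC v hv)
  rw [sub_zero, sub_right_comm, inner_sub_left, real_inner_self_eq_norm_sq] at hmono
  rw [eq_of_norm_eq_of_norm_sq_le_inner (hvx.trans hnorm.symm) (by linarith), sub_sub_cancel]
  exact hv

lemma norm_prox_eq_infDist_of_eq_suppFn_add {f : H → EReal} (hf : Gamma0 f) {C : Set H}
    (hne : C.Nonempty) (hcl : IsClosed C) (hco : Convex ℝ C) {c : ℝ}
    (hc : ∀ x, f x = suppFn C x + c) {x p : H} (hp : IsProx f x p) :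
    ‖p‖ = Metric.infDist x C := by
  obtain ⟨v, hv, hvx, hmax⟩ := exists_mem_norm_sub_eq_infDist hne hcl hco x
  have hprox : IsProx f x (x - v) := by
    rw [isProx_iff_sub_mem_subdifferential hf, sub_sub_cancel, funext hc,
      subdifferential_add_const]
    exact mem_subdifferential_suppFn hv hmax
  rw [hp.unique hf hprox, hvx]

theorem prox_norm_eq_dist_iff_suppFn_add_const_general
    (C : Set H) (hCcl : IsClosed C) (hCco : Convex ℝ C)
    (h0 : (0 : H) ∈ C)
    (f : H → EReal) (hf : Gamma0 f)
    (proxf : H → H) (hproxf : ∀ x, IsProx f x (proxf x)) :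
    (∀ x : H, ‖proxf x‖ = Metric.infDist x C) ↔
      ∃ c : ℝ, ∀ x, f x = suppFn C x + (c : EReal) := by
  constructor
  · intro hnorm
    have hCsub : ∀ z ∈ C, z ∈ subdifferential f 0 := fun z hz ↦ by
      have hz0 : proxf z = 0 := norm_eq_zero.1 (by rw [hnorm, Metric.infDist_zero_of_mem hz])
      simpa [hz0] using (hproxf z).sub_mem_subdifferential hf
    obtain ⟨a, ha⟩ := hf.exists_eq_coe (ne_top_of_mem_subdifferential hf.1 (hCsub 0 h0))
    exact ⟨a, eq_suppFn_add_of_forall_sub_prox_mem hf hproxf ha h0 hCsub fun x ↦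
      sub_mem_of_norm_prox_eq_infDist hf hCcl hCco h0 hCsub (hproxf x) (hnorm x)⟩
  · rintro ⟨c, hc⟩ x
    exact norm_prox_eq_infDist_of_eq_suppFn_add hf ⟨0, h0⟩ hCcl hCco hc (hproxf x)

/-- A function `f ∈ Γ₀(H)` satisfies `‖prox_f x‖ = d_C x` for all `x` if and only if `f` is the
support function of `C` up to an additive constant. -/
theorem prox_norm_eq_dist_iff_suppFn_add_const
    (C : Set H) (hCne : C.Nonempty) (hCcl : IsClosed C) (hCco : Convex ℝ C)
    (h0 : (0 : H) ∈ C)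
    (f : H → EReal) (hf : Gamma0 f)
    (proxf : H → H) (hproxf : ∀ x, IsProx f x (proxf x)) :
    (∀ x : H, ‖proxf x‖ = Metric.infDist x C) ↔
      ∃ c : ℝ, ∀ x, f x = suppFn C x + (c : EReal) :=
  prox_norm_eq_dist_iff_suppFn_add_const_general C hCcl hCco h0 f hf proxf hproxf
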